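/- arXiv:1202.2448 — 3 statements merged into one kernel-verified Lean document; each statement's English description precedes it below -/
import Mathlib

section
/- Let M(λ) = (1 - λ/ν)^{-k} be the mgf of a gamma distribution with parameters k, ν > 0 and let β(ω) = ω. Then the function h(S) = S₀ · (∂_λ M^{-1}(λ)|_{λ = S/S₀})^{-1} equals h(S) = (k/ν) S (S/S₀)^{1/k} for 0 < S ≤ S₀, i.e., the reduction of the heterogeneous SIR model with gamma-distributed susceptibility yields a power-law transmission function with exponent p = 1 + 1/k. -/
open Real

theorem hasDerivAt_const_mul_one_sub_rpow_neg (c p : ℝ) {x : ℝ} (hx : x ≠ 0) :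
    HasDerivAt (fun x : ℝ => c * (1 - x ^ (-p))) (c * p * x ^ (-p - 1)) x :=
  (((hasDerivAt_const x 1).sub (hasDerivAt_rpow_const (Or.inl hx))).const_mul c).congr_deriv
    (by ring)

theorem inv_const_mul_mul_rpow_neg_sub_one (c p : ℝ) {x : ℝ} (hx : 0 < x) :
    (c * p * x ^ (-p - 1))⁻¹ = c⁻¹ * p⁻¹ * (x * x ^ p) := by
  rw [← neg_add', rpow_neg hx.le, rpow_add hx, rpow_one, mul_inv, mul_inv, inv_inv]
  ring

theorem power_law_transmission_from_gamma_general
    (k ν S₀ : ℝ) (hS₀ : 0 < S₀)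
    (Minv : ℝ → ℝ) (hMinv : ∀ x : ℝ, Minv x = ν * (1 - x ^ (-(1 / k))))
    (h : ℝ → ℝ) (hh : ∀ S, h S = S₀ * (deriv Minv (S / S₀))⁻¹) :
    ∀ S : ℝ, 0 < S → S ≤ S₀ → h S = k / ν * S * (S / S₀) ^ (1 / k) := by
  intro S hS _
  have hx : 0 < S / S₀ := div_pos hS hS₀
  have hderiv : deriv Minv (S / S₀) = ν * (1 / k) * (S / S₀) ^ (-(1 / k) - 1) := by
    rw [funext hMinv]
    exact (hasDerivAt_const_mul_one_sub_rpow_neg ν (1 / k) hx.ne').deriv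
  rw [hh, hderiv, inv_const_mul_mul_rpow_neg_sub_one ν (1 / k) hx, one_div, inv_inv]
  field_simp

/-- Gamma-distributed susceptibility yields the power-law transmission function:
with M⁻¹(x) = ν(1 - x^{-1/k}), h(S) = S₀ / ((M⁻¹)'(S/S₀)) = (k/ν) S (S/S₀)^{1/k}. -/
theorem power_law_transmission_from_gamma
    (k ν S₀ : ℝ) (hk : 0 < k) (hν : 0 < ν) (hS₀ : 0 < S₀)
    (Minv : ℝ → ℝ) (hMinv : ∀ x : ℝ, Minv x = ν * (1 - x ^ (-(1 / k))))
    (h : ℝ → ℝ) (hh : ∀ S, h S = S₀ * (deriv Minv (S / S₀))⁻¹) :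
    ∀ S : ℝ, 0 < S → S ≤ S₀ → h S = k / ν * S * (S / S₀) ^ (1 / k) :=
  power_law_transmission_from_gamma_general k ν S₀ hS₀ Minv hMinv h hh
end

section
/- If the time-dependent mgf of the susceptibility distribution is M(t,λ) = M₀(λ + q(t))/M₀(q(t)) with M₀(λ) = (1 - λ/ν)^{-k} (gamma initial distribution), then the time-t distribution is again a gamma distribution with shape k and rate ν - q(t); in particular the time-t mean is k/(ν - q(t)), the time-t variance is k/(ν - q(t))², and the coefficient of variation σ(t)/mean(t) = 1/√k is constant in time. -/
/-!
Tilting by `q` turns `1 - (lam + q)/ν` over `1 - q/ν` into `1 - lam/(ν - q)`, so the tilted mgf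
is the gamma mgf of rate `c = ν - q`. Its cumulant generating function `-k log (1 - lam/c)` has
derivatives `k/(c - lam)` and `k/(c - lam)²`, giving mean `k/c`, variance `k/c²`, and hence the
coefficient of variation `1/√k`.
-/

open Real Filter Topology Set

/-- Mgf of the gamma distribution with shape `k` and rate `ν`; meaningful only for `lam < ν`. -/
noncomputable def gammaMgf (k ν lam : ℝ) : ℝ := (1 - lam / ν) ^ (-k)

section GammaMgf

variable {k ν c q lam x : ℝ}

theorem gammaMgf_add_div_gammaMgf (hν : 0 < ν) (hq : q < ν) (hlam : lam < ν - q) :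
    gammaMgf k ν (lam + q) / gammaMgf k ν q = gammaMgf k (ν - q) lam := by
  have hnum : 0 < 1 - (lam + q) / ν := by rw [sub_pos, div_lt_one hν]; linarith
  have hden : 0 < 1 - q / ν := by rw [sub_pos, div_lt_one hν]; exact hq
  have hνq : ν - q ≠ 0 := (sub_pos.mpr hq).ne'
  unfold gammaMgf
  rw [← div_rpow hnum.le hden.le]
  congr 1
  field_simp
  ring

theorem hasDerivAt_log_gammaMgf (hc : 0 < c) (hx : x < c) :
    HasDerivAt (fun y => log (gammaMgf k c y)) (k / (c - x)) x := by
  have hbase : ∀ y < c, 0 < 1 - y / c := fun y hy => by rw [sub_pos, div_lt_one hc]; exact hy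
  have hlocal : (fun y => log (gammaMgf k c y)) =ᶠ[𝓝 x] fun y => -k * log (1 - y / c) := by
    filter_upwards [Iio_mem_nhds hx] with y hy
    exact log_rpow (hbase y hy) _
  have hderiv :=
    ((((hasDerivAt_id' x).div_const c).const_sub 1).log (hbase x hx).ne').const_mul (-k)
  refine (hderiv.congr_of_eventuallyEq hlocal).congr_deriv ?_
  have : c - x ≠ 0 := (sub_pos.mpr hx).ne'
  field_simp

theorem deriv_log_gammaMgf (hc : 0 < c) (hx : x < c) :
    deriv (fun y => log (gammaMgf k c y)) x = k / (c - x) :=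
  (hasDerivAt_log_gammaMgf hc hx).deriv

theorem deriv_deriv_log_gammaMgf (hc : 0 < c) (hx : x < c) :
    deriv (deriv fun y => log (gammaMgf k c y)) x = k / (c - x) ^ 2 := by
  have hlocal : deriv (fun y => log (gammaMgf k c y)) =ᶠ[𝓝 x] fun y => k * (c - y)⁻¹ := by
    filter_upwards [Iio_mem_nhds hx] with y hy
    rw [deriv_log_gammaMgf hc hy, div_eq_mul_inv]
  rw [hlocal.deriv_eq]
  have hne : c - x ≠ 0 := (sub_pos.mpr hx).ne'
  have hderiv : HasDerivAt (fun y => k * (c - y)⁻¹) (k * (- -1 / (c - x) ^ 2)) x :=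
    ((((hasDerivAt_id' x).const_sub c).inv hne).const_mul k)
  rw [hderiv.deriv]
  ring

end GammaMgf

theorem sqrt_div_sq_div_div_eq_one_div_sqrt (k : ℝ) {c : ℝ} (hc : 0 < c) :
    √(k / c ^ 2) / (k / c) = 1 / √k := by
  rw [sqrt_div' k (sq_nonneg c), sqrt_sq hc.le, div_div_div_cancel_right₀ hc.ne', sqrt_div_self']

theorem gamma_stable_under_tilting_general
    (k ν q : ℝ) (hν : 0 < ν) (hq : q < ν)
    (M₀ Mt : ℝ → ℝ)
    (hM₀ : ∀ lam : ℝ, M₀ lam = (1 - lam / ν) ^ (-k))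
    (hMt : ∀ lam : ℝ, Mt lam = M₀ (lam + q) / M₀ q) :
    (∀ lam : ℝ, lam < ν - q → Mt lam = (1 - lam / (ν - q)) ^ (-k)) ∧
      deriv (fun lam => Real.log (Mt lam)) 0 = k / (ν - q) ∧
      deriv (deriv (fun lam => Real.log (Mt lam))) 0 = k / (ν - q) ^ 2 ∧
      Real.sqrt (k / (ν - q) ^ 2) / (k / (ν - q)) = 1 / Real.sqrt k := by
  have hc : 0 < ν - q := sub_pos.mpr hq
  have hMt_eq : ∀ lam, lam < ν - q → Mt lam = gammaMgf k (ν - q) lam := fun lam hlam => by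
    rw [hMt, hM₀, hM₀]
    exact gammaMgf_add_div_gammaMgf hν hq hlam
  have hlog : (fun lam => log (Mt lam)) =ᶠ[𝓝 0] fun lam => log (gammaMgf k (ν - q) lam) := by
    filter_upwards [Iio_mem_nhds hc] with lam hlam
    rw [hMt_eq lam hlam]
  refine ⟨hMt_eq, ?_, ?_, sqrt_div_sq_div_div_eq_one_div_sqrt k hc⟩
  · rw [hlog.deriv_eq, deriv_log_gammaMgf hc hc, sub_zero]
  · rw [hlog.deriv.deriv_eq, deriv_deriv_log_gammaMgf hc hc, sub_zero]

/-- If the initial susceptibility distribution is gamma with shape k and rate ν,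
then the tilted (time-t) mgf M₀(λ+q)/M₀(q) is the gamma mgf with shape k and
rate ν - q; in particular the time-t mean is k/(ν-q), the variance k/(ν-q)²,
and the coefficient of variation 1/√k is constant in time. -/
theorem gamma_stable_under_tilting
    (k ν q : ℝ) (hk : 0 < k) (hν : 0 < ν) (hq : q < ν)
    (M₀ Mt : ℝ → ℝ)
    (hM₀ : ∀ lam : ℝ, M₀ lam = (1 - lam / ν) ^ (-k))
    (hMt : ∀ lam : ℝ, Mt lam = M₀ (lam + q) / M₀ q) :
    (∀ lam : ℝ, lam < ν - q → Mt lam = (1 - lam / (ν - q)) ^ (-k)) ∧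
      deriv (fun lam => Real.log (Mt lam)) 0 = k / (ν - q) ∧
      deriv (deriv (fun lam => Real.log (Mt lam))) 0 = k / (ν - q) ^ 2 ∧
      Real.sqrt (k / (ν - q) ^ 2) / (k / (ν - q)) = 1 / Real.sqrt k :=
  gamma_stable_under_tilting_general k ν q hν hq M₀ Mt hM₀ hMt
end

section
/- In the heterogeneous SIR model with distributed infectivity reduced to ODEs: S' = -β̄(t) S I, I' = β̄(t) S I - γ I, β̄'(t) = S σ²(t) (variance equation with g = S), if two solutions share the same initial data S₀, I₀, β̄(0), γ but σ₁²(0) > σ₂²(0), then S₁''(0) < S₂''(0), and hence there exists ε > 0 such that S₁(t) < S₂(t) for all t ∈ (0, ε). -/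
/-!
Along the system, `S'' = β S I (β I - β S + γ) - S² I σ`, so two solutions with the same data
`S₀, I₀, β̄(0), γ` have `S₂ - S₁` vanishing to first order at `0`, with second derivative
`S₀² I₀ (σ₁(0) - σ₂(0)) > 0` there. A strict one-sided second-derivative test concludes.
-/

open Set Filter Topology

theorem eventually_nhdsGT_lt_of_deriv_deriv_pos {f : ℝ → ℝ} {x₀ : ℝ}
    (hf : 0 < deriv (deriv f) x₀) (hd : deriv f x₀ = 0) (hc : ContinuousAt f x₀) :
    ∀ᶠ x in 𝓝[>] x₀, f x₀ < f x := by
  have hpos : ∀ᶠ x in 𝓝[>] x₀, 0 < deriv f x := deriv_pos_right_of_sign_deriv <|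
    nhdsWithin_le_nhds <| eventually_nhdsWithin_sign_eq_of_deriv_pos hf hd
  obtain ⟨b, hb, hsub⟩ := mem_nhdsGT_iff_exists_Ioo_subset.mp hpos
  have hmono : StrictMonoOn f (Ico x₀ b) := by
    refine strictMonoOn_of_deriv_pos (convex_Ico x₀ b) ?_ (by rwa [interior_Ico])
    intro x hx
    rcases hx.1.eq_or_lt with rfl | hx₀
    · exact hc.continuousWithinAt
    · exact (differentiableAt_of_deriv_ne_zero (hsub ⟨hx₀, hx.2⟩).ne').continuousAt
        |>.continuousWithinAt
  filter_upwards [Ioo_mem_nhdsGT hb] with x hx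
  exact hmono (left_mem_Ico.mpr hb) (Ioo_subset_Ico_self hx) hx.1

theorem hasDerivAt_deriv_susceptible {S I β σ : ℝ → ℝ} {γ t : ℝ}
    (hS' : ∀ s, deriv S s = -(β s * S s * I s)) (hS : DifferentiableAt ℝ S t)
    (hI : HasDerivAt I (β t * S t * I t - γ * I t) t) (hβ : HasDerivAt β (S t * σ t) t) :
    HasDerivAt (deriv S)
      (β t * S t * I t * (β t * I t - β t * S t + γ) - S t ^ 2 * I t * σ t) t := by
  have hSt : HasDerivAt S (-(β t * S t * I t)) t := hS' t ▸ hS.hasDerivAt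
  rw [funext hS']
  exact ((hβ.mul hSt).mul hI).neg.congr_deriv (by simp only [Pi.mul_apply]; ring)

theorem infectivity_variance_comparison_general
    (S₁ I₁ β₁ σ₁ S₂ I₂ β₂ σ₂ : ℝ → ℝ) (γ : ℝ)
    (hS₁smooth : ContDiff ℝ 2 S₁) (hS₂smooth : ContDiff ℝ 2 S₂)
    (hI₁smooth : ContDiff ℝ 1 I₁) (hI₂smooth : ContDiff ℝ 1 I₂)
    (hβ₁smooth : ContDiff ℝ 1 β₁) (hβ₂smooth : ContDiff ℝ 1 β₂)
    (hS₁' : ∀ t, deriv S₁ t = -(β₁ t * S₁ t * I₁ t))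
    (hI₁' : ∀ t, deriv I₁ t = β₁ t * S₁ t * I₁ t - γ * I₁ t)
    (hβ₁' : ∀ t, deriv β₁ t = S₁ t * σ₁ t)
    (hS₂' : ∀ t, deriv S₂ t = -(β₂ t * S₂ t * I₂ t))
    (hI₂' : ∀ t, deriv I₂ t = β₂ t * S₂ t * I₂ t - γ * I₂ t)
    (hβ₂' : ∀ t, deriv β₂ t = S₂ t * σ₂ t)
    (hS0 : S₁ 0 = S₂ 0) (hI0 : I₁ 0 = I₂ 0) (hβ0 : β₁ 0 = β₂ 0)
    (hS0pos : 0 < S₁ 0) (hI0pos : 0 < I₁ 0)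
    (hσ0 : σ₂ 0 < σ₁ 0) :
    ∃ ε > 0, ∀ t ∈ Ioo (0 : ℝ) ε, S₁ t < S₂ t := by
  have hS₁d : Differentiable ℝ S₁ := hS₁smooth.differentiable (by norm_num)
  have hS₂d : Differentiable ℝ S₂ := hS₂smooth.differentiable (by norm_num)
  have hS₁'' := hasDerivAt_deriv_susceptible hS₁' (hS₁d 0)
    (hI₁' 0 ▸ (hI₁smooth.differentiable one_ne_zero 0).hasDerivAt)
    (hβ₁' 0 ▸ (hβ₁smooth.differentiable one_ne_zero 0).hasDerivAt)
  have hS₂'' := hasDerivAt_deriv_susceptible hS₂' (hS₂d 0)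
    (hI₂' 0 ▸ (hI₂smooth.differentiable one_ne_zero 0).hasDerivAt)
    (hβ₂' 0 ▸ (hβ₂smooth.differentiable one_ne_zero 0).hasDerivAt)
  have hderiv : deriv (fun t ↦ S₂ t - S₁ t) = fun t ↦ deriv S₂ t - deriv S₁ t :=
    funext fun t ↦ deriv_sub (hS₂d t) (hS₁d t)
  have hd : deriv (fun t ↦ S₂ t - S₁ t) 0 = 0 := by
    rw [hderiv]
    beta_reduce
    rw [hS₂', hS₁', hS0, hI0, hβ0, sub_self]
  have hdd :
      deriv (deriv fun t ↦ S₂ t - S₁ t) 0 = S₁ 0 ^ 2 * I₁ 0 * (σ₁ 0 - σ₂ 0) := by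
    have h : HasDerivAt (fun t ↦ deriv S₂ t - deriv S₁ t) _ 0 := hS₂''.sub hS₁''
    rw [hderiv, h.deriv, ← hS0, ← hI0, ← hβ0]
    ring
  have hdd_pos : 0 < deriv (deriv fun t ↦ S₂ t - S₁ t) 0 :=
    hdd ▸ mul_pos (mul_pos (pow_pos hS0pos 2) hI0pos) (sub_pos.mpr hσ0)
  obtain ⟨ε, hε, hsub⟩ := mem_nhdsGT_iff_exists_Ioo_subset.mp <|
    eventually_nhdsGT_lt_of_deriv_deriv_pos hdd_pos hd
      (hS₂d.continuous.sub hS₁d.continuous).continuousAt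
  exact ⟨ε, hε, fun t ht ↦ by simpa [hS0] using hsub ht⟩

/-- Heterogeneity in infectivity: if two reduced SIR systems
S' = -β̄SI, I' = β̄SI - γI, β̄' = Sσ² share initial data but σ₁²(0) > σ₂²(0),
then S₁ < S₂ on a right neighborhood of 0. -/
theorem infectivity_variance_comparison
    (S₁ I₁ β₁ σ₁ S₂ I₂ β₂ σ₂ : ℝ → ℝ) (γ : ℝ) (hγ : 0 ≤ γ)
    (hS₁smooth : ContDiff ℝ 2 S₁) (hS₂smooth : ContDiff ℝ 2 S₂)
    (hI₁smooth : ContDiff ℝ 1 I₁) (hI₂smooth : ContDiff ℝ 1 I₂)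
    (hβ₁smooth : ContDiff ℝ 1 β₁) (hβ₂smooth : ContDiff ℝ 1 β₂)
    (hσ₁cont : Continuous σ₁) (hσ₂cont : Continuous σ₂)
    (hS₁' : ∀ t, deriv S₁ t = -(β₁ t * S₁ t * I₁ t))
    (hI₁' : ∀ t, deriv I₁ t = β₁ t * S₁ t * I₁ t - γ * I₁ t)
    (hβ₁' : ∀ t, deriv β₁ t = S₁ t * σ₁ t)
    (hS₂' : ∀ t, deriv S₂ t = -(β₂ t * S₂ t * I₂ t))
    (hI₂' : ∀ t, deriv I₂ t = β₂ t * S₂ t * I₂ t - γ * I₂ t)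
    (hβ₂' : ∀ t, deriv β₂ t = S₂ t * σ₂ t)
    (hS0 : S₁ 0 = S₂ 0) (hI0 : I₁ 0 = I₂ 0) (hβ0 : β₁ 0 = β₂ 0)
    (hS0pos : 0 < S₁ 0) (hI0pos : 0 < I₁ 0)
    (hσ0 : σ₂ 0 < σ₁ 0) :
    ∃ ε > 0, ∀ t ∈ Ioo (0 : ℝ) ε, S₁ t < S₂ t :=
  infectivity_variance_comparison_general S₁ I₁ β₁ σ₁ S₂ I₂ β₂ σ₂ γ hS₁smooth hS₂smooth hI₁smooth
    hI₂smooth hβ₁smooth hβ₂smooth hS₁' hI₁' hβ₁' hS₂' hI₂' hβ₂' hS0 hI0 hβ0 hS0pos hI0pos hσ0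
end
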